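/- Let X be a linear order, m ≥ 1 an integer, and let a, b, c, d, e : Fin m → X be pairwise distinct functions. Then it is impossible that the equalities φ(a,b) = φ(c,d), φ(b,c) = φ(c,e), φ(a,d) = φ(a,e), φ(b,e) = φ(d,e), φ(a,c) = φ(b,d) all hold with the five common values pairwise distinct. (This is the impossibility, under the coloring (η₂, Δ), of a colored K₅ of color type (2,2,2,2,2) containing exactly three monochromatic copies of K_{1,2}.) -/
import Mathlib



noncomputable def eta {X : Type*} {m : ℕ} (v w : Fin m → X) : Option (Fin m × Sym2 X) := by
  classical
  exact if h : v ≠ w then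
    some (
      let i := (Finset.univ.filter fun i => v i ≠ w i).min' (by
        obtain ⟨i, hi⟩ := Function.ne_iff.mp h
        exact ⟨i, Finset.mem_filter.mpr ⟨Finset.mem_univ _, hi⟩⟩)
      (i, s(v i, w i)))
  else none

/-- Lexicographic order on functions `Fin m → X`: `v ≺ w` iff at the least index where
they differ, `v` is smaller. -/
def lexLt {X : Type*} [LinearOrder X] {m : ℕ} (v w : Fin m → X) : Prop :=
  ∃ i : Fin m, (∀ j : Fin m, j < i → v j = w j) ∧ v i < w i

/-- `Δ(v,w) : Fin m → {−1,0,+1}` compares `v` and `w` coordinatewise. -/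
def delta {X : Type*} [LinearOrder X] {m : ℕ} (v w : Fin m → X) : Fin m → ℤ :=
  fun i => if v i < w i then 1 else if v i = w i then 0 else -1

/-- The symmetric coloring `φ(v,w) := (η(v,w), Δ(min(v,w), max(v,w)))`, where min and max
are with respect to the lexicographic order. -/
noncomputable def phi {X : Type*} [LinearOrder X] {m : ℕ} (v w : Fin m → X) :
    Option (Fin m × Sym2 X) × (Fin m → ℤ) := by
  classical
  exact (eta v w, if lexLt v w then delta v w else delta w v)

section Aux
variable {X : Type*} {m : ℕ}

lemma eta_spec (v w : Fin m → X) (h : v ≠ w) :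
    ∃ i : Fin m, eta v w = some (i, s(v i, w i)) ∧ (∀ j, j < i → v j = w j) ∧
      v i ≠ w i ∧ (∀ j, v j ≠ w j → i ≤ j) := by
  classical
  unfold eta
  rw [dif_pos h]
  refine ⟨_, rfl, ?_, ?_, ?_⟩
  · intro j hj
    by_contra hne
    have hmem : j ∈ Finset.univ.filter fun i => v i ≠ w i := by simp [hne]
    exact absurd (Finset.min'_le _ _ hmem) (not_le.mpr hj)
  · have := Finset.min'_mem (Finset.univ.filter fun i => v i ≠ w i)
      (by obtain ⟨i, hi⟩ := Function.ne_iff.mp h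
          exact ⟨i, Finset.mem_filter.mpr ⟨Finset.mem_univ _, hi⟩⟩)
    simpa using this
  · intro j hj
    exact Finset.min'_le _ _ (by simp [hj])
lemma eta_comm (v w : Fin m → X) : eta v w = eta w v := by
  rcases eq_or_ne v w with rfl | h
  · rfl
  · obtain ⟨i, e1, ag1, ne1, min1⟩ := eta_spec v w h
    obtain ⟨i', e2, ag2, ne2, min2⟩ := eta_spec w v h.symm
    have hii' : i = i' := le_antisymm (min1 _ (Ne.symm ne2)) (min2 _ (Ne.symm ne1))
    rw [e1, e2, ← hii', Sym2.eq_swap]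

variable [LinearOrder X]

lemma phi_fst (v w : Fin m → X) : (phi v w).1 = eta v w := rfl

lemma lexLt_iff (v w : Fin m → X) (i : Fin m)
    (hag : ∀ j, j < i → v j = w j) (hne : v i ≠ w i) :
    lexLt v w ↔ v i < w i := by
  constructor
  · rintro ⟨k, hk1, hk2⟩
    rcases lt_trichotomy k i with hki | rfl | hki
    · exact absurd (hag k hki) hk2.ne
    · exact hk2
    · exact absurd (hk1 i hki) hne
  · exact fun hlt => ⟨i, hag, hlt⟩

lemma phi_snd_of_lt (v w : Fin m → X) (i : Fin m)
    (hag : ∀ j, j < i → v j = w j) (hlt : v i < w i) :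
    (phi v w).2 = delta v w := by
  have hl : lexLt v w := (lexLt_iff v w i hag hlt.ne).mpr hlt
  unfold phi
  dsimp only
  rw [if_pos hl]

lemma phi_snd_of_gt (v w : Fin m → X) (i : Fin m)
    (hag : ∀ j, j < i → v j = w j) (hlt : w i < v i) :
    (phi v w).2 = delta w v := by
  have hl : ¬ lexLt v w := by
    rw [lexLt_iff v w i hag hlt.ne']
    exact not_lt.mpr hlt.le
  unfold phi
  dsimp only
  rw [if_neg hl]

lemma phi_comm (v w : Fin m → X) : phi v w = phi w v := by
  rcases eq_or_ne v w with rfl | h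
  · rfl
  obtain ⟨i, e1, ag, ne, -⟩ := eta_spec v w h
  have hag' : ∀ j, j < i → w j = v j := fun j hj => (ag j hj).symm
  have hsnd : (phi v w).2 = (phi w v).2 := by
    rcases lt_trichotomy (v i) (w i) with hlt | heq | hlt
    · rw [phi_snd_of_lt v w i ag hlt, phi_snd_of_gt w v i hag' hlt]
    · exact absurd heq ne
    · rw [phi_snd_of_gt v w i ag hlt, phi_snd_of_lt w v i hag' hlt]
  have hfst : (phi v w).1 = (phi w v).1 := by
    rw [phi_fst, phi_fst, eta_comm]
  exact Prod.ext hfst hsnd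

lemma delta_of_lt {v w : Fin m → X} {j : Fin m} (h : v j < w j) : delta v w j = 1 := by
  unfold delta; rw [if_pos h]

lemma delta_of_eq {v w : Fin m → X} {j : Fin m} (h : v j = w j) : delta v w j = 0 := by
  unfold delta; rw [if_neg (by simp [h]), if_pos h]

lemma delta_of_gt {v w : Fin m → X} {j : Fin m} (h : w j < v j) : delta v w j = -1 := by
  unfold delta; rw [if_neg (not_lt.mpr h.le), if_neg h.ne']

lemma delta_neg (v w : Fin m → X) (j : Fin m) : delta w v j = -delta v w j := by
  rcases lt_trichotomy (v j) (w j) with h | h | h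
  · rw [delta_of_gt h, delta_of_lt h]
  · rw [delta_of_eq h, delta_of_eq h.symm]; rfl
  · rw [delta_of_lt h, delta_of_gt h]; rfl

lemma delta_apply_eq {v w x y : Fin m → X} {j : Fin m}
    (h : delta v w j = delta x y j) :
    (v j < w j ∧ x j < y j) ∨ (v j = w j ∧ x j = y j) ∨ (w j < v j ∧ y j < x j) := by
  rcases lt_trichotomy (v j) (w j) with h1 | h1 | h1 <;>
    rcases lt_trichotomy (x j) (y j) with h2 | h2 | h2 <;>
    first
      | exact Or.inl ⟨h1, h2⟩
      | exact Or.inr (Or.inl ⟨h1, h2⟩)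
      | exact Or.inr (Or.inr ⟨h1, h2⟩)
      | (rw [delta_of_lt h1] at h
         first
           | (rw [delta_of_eq h2] at h; norm_num at h)
           | (rw [delta_of_gt h2] at h; norm_num at h))
      | (rw [delta_of_eq h1] at h
         first
           | (rw [delta_of_lt h2] at h; norm_num at h)
           | (rw [delta_of_gt h2] at h; norm_num at h))
      | (rw [delta_of_gt h1] at h
         first
           | (rw [delta_of_lt h2] at h; norm_num at h)
           | (rw [delta_of_eq h2] at h; norm_num at h))

lemma cherry (x y z : Fin m → X) (hxy : x ≠ y) (hxz : x ≠ z)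
    (h : phi x y = phi x z) :
    ∃ i : Fin m, (∀ j, j ≤ i → y j = z j) ∧ x i ≠ y i ∧ x i ≠ z i ∧
      (∀ j, delta x y j = delta x z j) := by
  obtain ⟨i, e1, ag1, ne1, -⟩ := eta_spec x y hxy
  obtain ⟨i', e2, ag2, ne2, -⟩ := eta_spec x z hxz
  have hfst : eta x y = eta x z := by
    rw [← phi_fst, ← phi_fst, h]
  rw [e1, e2] at hfst
  simp only [Option.some.injEq, Prod.mk.injEq] at hfst
  obtain ⟨rfl, hpair⟩ : i = i' ∧ _ := hfst
  have hyz : y i = z i := by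
    rcases Sym2.eq_iff.mp hpair with ⟨-, h2⟩ | ⟨h1, h2⟩
    · exact h2
    · exact absurd h2.symm ne1
  have hne2' : x i ≠ z i := fun hh => ne1 (hh.trans hyz.symm)
  refine ⟨i, ?_, ne1, hne2', ?_⟩
  · intro j hj
    rcases lt_or_eq_of_le hj with hj | rfl
    · exact (ag1 j hj).symm.trans (ag2 j hj)
    · exact hyz
  · have hsnd : (phi x y).2 = (phi x z).2 := by rw [h]
    rcases lt_trichotomy (x i) (y i) with hlt | heq | hlt
    · rw [phi_snd_of_lt x y i ag1 hlt, phi_snd_of_lt x z i ag2 (hyz ▸ hlt)] at hsnd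
      exact fun j => congrFun hsnd j
    · exact absurd heq ne1
    · rw [phi_snd_of_gt x y i ag1 hlt, phi_snd_of_gt x z i ag2 (hyz ▸ hlt)] at hsnd
      intro j
      have hj := congrFun hsnd j
      rw [delta_neg x y j, delta_neg x z j] at hj
      exact neg_inj.mp hj

end Aux

/-- Under the coloring `φ = (η, Δ)` there is no colored `K₅` of color type `(2,2,2,2,2)`
containing exactly three monochromatic copies of `K_{1,2}`: the pattern
`φ(a,b)=φ(c,d)`, `φ(b,c)=φ(c,e)`, `φ(a,d)=φ(a,e)`, `φ(b,e)=φ(d,e)`, `φ(a,c)=φ(b,d)`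
with the five common values pairwise distinct is impossible. -/
theorem no_K5_three_mono_cherries {X : Type*} [LinearOrder X] {m : ℕ} (hm : 1 ≤ m)
    (a b c d e : Fin m → X)
    (hab : a ≠ b) (hac : a ≠ c) (had : a ≠ d) (hae : a ≠ e)
    (hbc : b ≠ c) (hbd : b ≠ d) (hbe : b ≠ e)
    (hcd : c ≠ d) (hce : c ≠ e) (hde : d ≠ e) :
    ¬ (phi a b = phi c d ∧ phi b c = phi c e ∧ phi a d = phi a e ∧
       phi b e = phi d e ∧ phi a c = phi b d ∧
       phi a b ≠ phi b c ∧ phi a b ≠ phi a d ∧ phi a b ≠ phi b e ∧ phi a b ≠ phi a c ∧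
       phi b c ≠ phi a d ∧ phi b c ≠ phi b e ∧ phi b c ≠ phi a c ∧
       phi a d ≠ phi b e ∧ phi a d ≠ phi a c ∧
       phi b e ≠ phi a c) := by
  rintro ⟨h1, h2, h3, h4, h5, -, -, -, -, -, -, -, -, -, -⟩
  -- the three monochromatic cherries
  obtain ⟨i2, agBE, hcb2, hce2, d2⟩ :=
    cherry c b e hbc.symm hce ((phi_comm c b).trans h2)
  obtain ⟨i3, agDE, had3, hae3, d3⟩ := cherry a d e had hae h3
  obtain ⟨i4, agBD, heb4, hed4, d4⟩ :=
    cherry e b d hbe.symm hde.symm ((phi_comm e b).trans (h4.trans (phi_comm d e)))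
  -- specs for the two monochromatic matchings
  obtain ⟨p1, eab, agAB, neAB, minAB⟩ := eta_spec a b hab
  obtain ⟨q1, ecd, agCD, neCD, -⟩ := eta_spec c d hcd
  obtain ⟨p5, eac, agAC, neAC, -⟩ := eta_spec a c hac
  obtain ⟨q5, ebd, agBD5, neBD5, -⟩ := eta_spec b d hbd
  have hf1 : eta a b = eta c d := by rw [← phi_fst, ← phi_fst, h1]
  rw [eab, ecd] at hf1
  simp only [Option.some.injEq, Prod.mk.injEq] at hf1
  obtain ⟨rfl, hpair1⟩ : p1 = q1 ∧ _ := hf1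
  have hf5 : eta a c = eta b d := by rw [← phi_fst, ← phi_fst, h5]
  rw [eac, ebd] at hf5
  simp only [Option.some.injEq, Prod.mk.injEq] at hf5
  obtain ⟨rfl, hpair5⟩ : p5 = q5 ∧ _ := hf5
  -- index ordering
  have h24 : i2 < i4 := by
    by_contra hcon
    push_neg at hcon
    exact heb4 (agBE i4 hcon).symm
  have h34 : i3 < i4 := by
    by_contra hcon
    push_neg at hcon
    exact hed4 (agDE i4 hcon).symm
  have h45 : i4 < p5 := by
    by_contra hcon
    push_neg at hcon
    exact neBD5 (agBD p5 hcon)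
  have h2lt5 : i2 < p5 := h24.trans h45
  have h12 : p1 ≤ i2 := by
    refine minAB i2 ?_
    rw [agAC i2 h2lt5]
    exact hcb2
  have h15 : p1 < p5 := lt_of_le_of_lt h12 h2lt5
  have hac1 : a p1 = c p1 := agAC p1 h15
  have hbd1 : b p1 = d p1 := agBD5 p1 h15
  -- the sign vectors of the first matching color agree with aligned orientation
  have delta1 : ∀ j, delta a b j = delta c d j := by
    have hsnd : (phi a b).2 = (phi c d).2 := by rw [h1]
    rcases lt_trichotomy (a p1) (b p1) with hlt | heq | hlt
    · have hlt' : c p1 < d p1 := by rw [← hac1, ← hbd1]; exact hlt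
      rw [phi_snd_of_lt a b p1 agAB hlt, phi_snd_of_lt c d p1 agCD hlt'] at hsnd
      exact fun j => congrFun hsnd j
    · exact absurd heq neAB
    · have hlt' : d p1 < c p1 := by rw [← hac1, ← hbd1]; exact hlt
      rw [phi_snd_of_gt a b p1 agAB hlt, phi_snd_of_gt c d p1 agCD hlt'] at hsnd
      intro j
      have hj := congrFun hsnd j
      rw [delta_neg a b j, delta_neg c d j] at hj
      exact neg_inj.mp hj
  -- work at the top coordinate r := p5
  set r := p5 with hr
  -- rule out the crossed pairing at r
  have huncross : a r = b r ∧ c r = d r := by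
    rcases Sym2.eq_iff.mp hpair5 with huv | ⟨hvd, hvb⟩
    · exact huv
    · rcases delta_apply_eq (delta1 r) with ⟨k1, k2⟩ | ⟨k1, k2⟩ | ⟨k1, k2⟩
      · rw [← hvb] at k1
        rw [← hvd] at k2
        exact absurd (k1.trans k2) (lt_irrefl _)
      · exact absurd (k1.trans hvb.symm) neAC
      · rw [← hvb] at k1
        rw [← hvd] at k2
        exact absurd (k2.trans k1) (lt_irrefl _)
  obtain ⟨habr, hcdr⟩ := huncross
  -- final pointwise contradiction at r
  rcases lt_trichotomy (a r) (c r) with hacr | hacr | hacr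
  · -- a r < c r
    have he1 : e r < c r := by
      rcases delta_apply_eq (d2 r) with ⟨k1, k2⟩ | ⟨k1, k2⟩ | ⟨k1, k2⟩
      · exact absurd (lt_of_lt_of_eq k1 habr.symm) (lt_asymm hacr)
      · exact absurd (k1.trans habr.symm).symm neAC
      · exact k2
    have he2 : a r < e r := by
      rcases delta_apply_eq (d3 r) with ⟨k1, k2⟩ | ⟨k1, k2⟩ | ⟨k1, k2⟩
      · exact k2
      · exact absurd (k1.trans hcdr.symm) neAC
      · exact absurd (lt_of_eq_of_lt hcdr k1) (lt_asymm hacr)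
    rcases delta_apply_eq (d4 r) with ⟨k1, k2⟩ | ⟨k1, k2⟩ | ⟨k1, k2⟩
    · exact absurd (lt_of_lt_of_eq k1 habr.symm) (lt_asymm he2)
    · exact absurd (k1.trans habr.symm) he2.ne'
    · exact absurd (lt_of_eq_of_lt hcdr k2) (lt_asymm he1)
  · exact neAC hacr
  · -- c r < a r
    have he1 : c r < e r := by
      rcases delta_apply_eq (d2 r) with ⟨k1, k2⟩ | ⟨k1, k2⟩ | ⟨k1, k2⟩
      · exact k2
      · exact absurd (k1.trans habr.symm).symm neAC
      · exact absurd (lt_of_eq_of_lt habr k1) (lt_asymm hacr)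
    have he2 : e r < a r := by
      rcases delta_apply_eq (d3 r) with ⟨k1, k2⟩ | ⟨k1, k2⟩ | ⟨k1, k2⟩
      · exact absurd (lt_of_lt_of_eq k1 hcdr.symm) (lt_asymm hacr)
      · exact absurd (k1.trans hcdr.symm) neAC
      · exact k2
    rcases delta_apply_eq (d4 r) with ⟨k1, k2⟩ | ⟨k1, k2⟩ | ⟨k1, k2⟩
    · exact absurd (lt_of_lt_of_eq k2 hcdr.symm) (lt_asymm he1)
    · exact absurd (k1.trans habr.symm) he2.ne
    · exact absurd (lt_of_eq_of_lt habr k1) (lt_asymm he2)
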